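/- A recursively presentable group G is *-universal if and only if the word problem of G is not a universal ceer but the word problem of G * (ℤ/2ℤ) is a universal ceer. -/

import Mathlib

/-- A predicate on a primcodable type is computably enumerable (c.e.). -/
def CePred {α : Type} [Primcodable α] (p : α → Prop) : Prop :=
  Partrec fun a => Part.assert (p a) fun _ => Part.some ()

/-- The `e`-th c.e. set `W_e`, i.e. the domain of the `e`-th partial computable function. -/
def WSet (e : ℕ) : Set ℕ :=
  {n | ((Denumerable.ofNat Nat.Partrec.Code e).eval n).Dom}

/-- A ceer: a computably enumerable equivalence relation on ℕ. -/
def Ceer (E : ℕ → ℕ → Prop) : Prop :=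
  Equivalence E ∧ CePred fun p : ℕ × ℕ => E p.1 p.2

/-- Computable reducibility of binary relations (on coded types). -/
def Reduction {α β : Type} [Primcodable α] [Primcodable β]
    (E : α → α → Prop) (R : β → β → Prop) : Prop :=
  ∃ f : α → β, Computable f ∧ ∀ a b, E a b ↔ R (f a) (f b)

/-- A relation is universal if every ceer computably reduces to it. -/
def Universal {β : Type} [Primcodable β] (R : β → β → Prop) : Prop :=
  ∀ E : ℕ → ℕ → Prop, Ceer E → Reduction E R

/-- The word problem of a group `G` with respect to a coding `ν` of words. -/
def WP {α G : Type} (ν : α → G) : α → α → Prop := fun a b => ν a = ν b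


open Monoid

/-- Evaluation of a word over the generators of `G` and `H` in the free product `G ∗ H`:
a letter `Sum.inl a` denotes the generator of `G` coded by `a`, and `Sum.inr n` denotes the
generator of `H` coded by `n`. -/
def freeEval {α G H : Type} [Group G] [Group H] (ν : α → G) (μ : ℕ → H)
    (l : List (α ⊕ ℕ)) : Coprod G H :=
  (l.map (Sum.elim (fun a => Coprod.inl (ν a)) fun n => Coprod.inr (μ n))).prod

/-- `G` (recursively presented via the coding `ν`) is ∗-universal: its word problem is not a
universal ceer, yet for every nontrivial group `H` the word problem of `G ∗ H` is universal. -/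
def StarUniversal {α G : Type} [Primcodable α] [Group G] (ν : α → G) : Prop :=
  ¬ Universal (WP ν) ∧
  ∀ (H : Type) (_ : Group H), Nontrivial H →
    ∀ μ : ℕ → H, Function.Surjective μ → Universal (WP (freeEval ν μ))


/-!
Fix `h ≠ 1` in `H`. Sending one copy of `G` identically and a second copy by `g ↦ h⁻¹ g h`
embeds the free product `G ∗ G` into `G ∗ H` (ping-pong on reduced words). A word over
`G ∗ ℤ/2ℤ` evaluates to `a ^ p * u`, with `u` in the image of `G ∗ G` for `h = a`; replacing
its letters `a` alternately by `h` and `h⁻¹` gives a word of `G ∗ H` evaluating to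
`h ^ p * u'`, with `u'` the image of the same element of `G ∗ G`. Since `p` can be read off
in `H` and both embeddings are injective, this substitution reduces the word problem of
`G ∗ ℤ/2ℤ` to that of `G ∗ H`.
-/

namespace Monoid.Coprod

variable {G H : Type} [Group G] [Group H]

abbrev factor (G H : Type) (b : Bool) : Type := cond b H G

instance instGroupFactor : (b : Bool) → Group (factor G H b)
  | false => ‹Group G›
  | true => ‹Group H›

noncomputable def toCoprodI : G ∗ H →* CoprodI (factor G H) :=
  lift (CoprodI.of (M := factor G H) (i := false) : G →* _)
    (CoprodI.of (M := factor G H) (i := true) : H →* _)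

def conjFamily (h : H) (b : Bool) : G →* G ∗ H :=
  cond b ((MulAut.conj (inr h)⁻¹).toMonoidHom.comp inl) inl

noncomputable def liftConj (h : H) : CoprodI (fun _ : Bool => G) →* G ∗ H :=
  CoprodI.lift (conjFamily h)

@[simp]
lemma liftConj_of_false (h : H) (g : G) : liftConj h (CoprodI.of (i := false) g) = inl g :=
  CoprodI.lift_of _ _

@[simp]
lemma liftConj_of_true (h : H) (g : G) :
    liftConj h (CoprodI.of (i := true) g) = (inr h)⁻¹ * inl g * inr h := by
  simp [liftConj, conjFamily, CoprodI.lift_of]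

lemma snd_liftConj (h : H) (u : CoprodI (fun _ : Bool => G)) : snd (liftConj h u) = 1 := by
  induction u using CoprodI.induction_on with
  | one => simp
  | of b g => cases b <;> simp
  | mul x y hx hy => simp [hx, hy]

open CoprodI Word

def pingPongSet (h : H) (b : Bool) : Set (Word (factor G H)) :=
  cond b {w | w.toList.head? = some ⟨true, h⁻¹⟩} {w | w.fstIdx = some false}

lemma fstIdx_of_mem_pingPongSet {h : H} {b : Bool} {w : Word (factor G H)}
    (hw : w ∈ pingPongSet h b) : w.fstIdx = some b := by
  cases b
  · exact hw
  · simp [Word.fstIdx, show w.toList.head? = _ from hw]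

lemma toCoprodI_conjFamily_smul_mem [∀ b, DecidableEq (factor G H b)] {h : H} (hh : h ≠ 1)
    (b : Bool) {g : G} (hg : g ≠ 1) {w : Word (factor G H)} (hw : w.fstIdx ≠ some b) :
    toCoprodI (conjFamily h b g) • w ∈ pingPongSet h b := by
  cases b
  · show of (M := factor G H) (i := false) g • w ∈ pingPongSet h false
    rw [← cons_eq_smul (h1 := hw) (h2 := hg)]
    simp [pingPongSet]
  · have hconj : toCoprodI (conjFamily h true g) =
        of (M := factor G H) (i := true) h⁻¹ * of (i := false) g * of (i := true) h := by
      simp [conjFamily, toCoprodI]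
    have hh' : (h : factor G H true) ≠ 1 := hh
    rw [hconj, mul_smul, mul_smul, ← cons_eq_smul (h1 := hw) (h2 := hh')]
    have hw₁ : (cons (i := true) (h : factor G H true) w hw hh').fstIdx ≠ some false := by simp
    rw [← cons_eq_smul (h1 := hw₁) (h2 := hg)]
    have hw₂ : (cons (i := false) (g : factor G H false) _ hw₁ hg).fstIdx ≠ some true := by
      simp
    rw [← cons_eq_smul (h1 := hw₂) (h2 := inv_ne_one.mpr hh')]
    rfl

open Pointwise in
theorem liftConj_injective {h : H} (hh : h ≠ 1) : Function.Injective (liftConj (G := G) h) := by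
  classical
  let f : (b : Bool) → G →* CoprodI (factor G H) := fun b => toCoprodI.comp (conjFamily h b)
  have hf : CoprodI.lift f = toCoprodI.comp (liftConj h) := by
    ext b g; cases b <;> rfl
  have hpp : Pairwise fun i j => ∀ g : G, g ≠ 1 →
      f i g • pingPongSet (G := G) h j ⊆ pingPongSet h i := by
    rintro i j hij g hg _ ⟨w, hw, rfl⟩
    exact toCoprodI_conjFamily_smul_mem hh i hg
      (by simpa [fstIdx_of_mem_pingPongSet hw] using hij.symm)
  -- Instead of the usual requirement that some factor has three elements, we use that the empty
  -- word lies outside both ping-pong sets but is moved into one by every nontrivial letter.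
  have hmem : ∀ {i j} (w : NeWord (fun _ : Bool => G) i j),
      CoprodI.lift f w.prod • Word.empty ∈ pingPongSet (G := G) h i := by
    intro i j w
    induction w with
    | singleton x hx =>
      simpa [f] using toCoprodI_conjFamily_smul_mem hh _ hx (by simp [Word.fstIdx])
    | append w₁ hne w₂ _ ih₂ =>
      rw [NeWord.append_prod, map_mul, mul_smul]
      exact lift_word_ping_pong f _ hpp w₁ hne (Set.smul_mem_smul_set ih₂)
  refine (injective_iff_map_eq_one _).mpr fun x hx => ?_
  by_contra hx1
  have hne : Word.equiv x ≠ Word.empty := fun h' => by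
    have hx' := Word.equiv.symm_apply_apply x
    rw [h'] at hx'
    exact hx1 (hx'.symm.trans Word.prod_empty)
  obtain ⟨i, j, w, hw⟩ := NeWord.of_word _ hne
  have hwx : w.prod = x := by
    rw [NeWord.prod, hw]; exact Word.equiv.symm_apply_apply x
  have hempty := hmem w
  rw [hwx, hf, MonoidHom.comp_apply, hx, map_one, one_smul] at hempty
  cases i <;> simp [pingPongSet, Word.fstIdx] at hempty

lemma cond_mul_liftConj_inj {h : H} (hh : h ≠ 1) {u u' : CoprodI (fun _ : Bool => G)}
    {p p' : Bool} :
    cond p (inr h) 1 * liftConj h u = cond p' (inr h) 1 * liftConj h u' ↔ (u, p) = (u', p') := by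
  refine ⟨fun he => ?_, fun he => by cases he; rfl⟩
  have hp : p = p' := by
    have hs := congrArg snd he
    simp only [map_mul, snd_liftConj, mul_one] at hs
    cases p <;> cases p' <;> simp_all [eq_comm]
  subst hp
  exact Prod.ext (liftConj_injective hh (mul_left_cancel he)) rfl

end Monoid.Coprod

section Words

open Monoid Coprod

variable {α G H : Type} [Group G] [Group H]

noncomputable def decomposeWord (ν : α → G) :
    List (α ⊕ ℕ) → CoprodI (fun _ : Bool => G) × Bool
  | [] => (1, false)
  | .inl a :: w =>
    (CoprodI.of (i := (decomposeWord ν w).2) (ν a) * (decomposeWord ν w).1,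
      (decomposeWord ν w).2)
  | .inr n :: w => ((decomposeWord ν w).1, xor n.bodd (decomposeWord ν w).2)

def alternateWordStep (c₁ c₂ : ℕ) (x : α ⊕ ℕ) (s : List (α ⊕ ℕ) × Bool) :
    List (α ⊕ ℕ) × Bool :=
  x.elim (fun a => (.inl a :: s.1, s.2))
    fun n => bif n.bodd then (.inr (cond s.2 c₂ c₁) :: s.1, !s.2) else s

/-- Drops the letters `Sum.inr n` with `n` even and replaces the others alternately, counting
from the right, by `Sum.inr c₁` and `Sum.inr c₂`; the second component is the parity of their
number. -/
def alternateWord (c₁ c₂ : ℕ) (w : List (α ⊕ ℕ)) : List (α ⊕ ℕ) × Bool :=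
  w.foldr (alternateWordStep c₁ c₂) ([], false)

lemma freeEval_cons_inl (ν : α → G) (μ : ℕ → H) (a : α) (w : List (α ⊕ ℕ)) :
    freeEval ν μ (.inl a :: w) = inl (ν a) * freeEval ν μ w := rfl

lemma freeEval_cons_inr (ν : α → G) (μ : ℕ → H) (n : ℕ) (w : List (α ⊕ ℕ)) :
    freeEval ν μ (.inr n :: w) = inr (μ n) * freeEval ν μ w := rfl

theorem freeEval_alternateWord (ν : α → G) {μ : ℕ → H} {h : H} {c₁ c₂ : ℕ}
    (hc₁ : μ c₁ = h) (hc₂ : μ c₂ = h⁻¹) (w : List (α ⊕ ℕ)) :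
    (alternateWord c₁ c₂ w).2 = (decomposeWord ν w).2 ∧
      freeEval ν μ (alternateWord c₁ c₂ w).1 =
        cond (decomposeWord ν w).2 (inr h) 1 * liftConj h (decomposeWord ν w).1 := by
  induction w with
  | nil => simp [alternateWord, decomposeWord, freeEval]
  | cons x w ih =>
    obtain ⟨hp, he⟩ := ih
    change (alternateWordStep c₁ c₂ x (alternateWord c₁ c₂ w)).2 = _ ∧
      freeEval ν μ (alternateWordStep c₁ c₂ x (alternateWord c₁ c₂ w)).1 = _
    rcases x with a | n
    · refine ⟨hp, ?_⟩
      simp only [alternateWordStep, Sum.elim_inl, freeEval_cons_inl, he, decomposeWord, map_mul]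
      cases (decomposeWord ν w).2 <;> simp [mul_assoc]
    · cases hn : n.bodd
      · simpa [alternateWordStep, decomposeWord, hn] using ⟨hp, he⟩
      · simp only [alternateWordStep, Sum.elim_inr, hn, cond_true, decomposeWord, hp,
          freeEval_cons_inr, he]
        cases (decomposeWord ν w).2 <;> simp [hc₁, hc₂]

lemma ofAdd_natCast_zmod_two (n : ℕ) :
    Multiplicative.ofAdd (n : ZMod 2) = cond n.bodd (Multiplicative.ofAdd 1) 1 := by
  rw [← ZMod.natCast_mod, Nat.mod_two_of_bodd]
  cases n.bodd <;> rfl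

lemma freeEval_zmod_two_alternateWord (ν : α → G) (w : List (α ⊕ ℕ)) :
    freeEval ν (fun n => Multiplicative.ofAdd (n : ZMod 2)) (alternateWord 1 1 w).1 =
      freeEval ν (fun n => Multiplicative.ofAdd (n : ZMod 2)) w := by
  induction w with
  | nil => rfl
  | cons x w ih =>
    change freeEval ν _ (alternateWordStep 1 1 x (alternateWord 1 1 w)).1 = _
    rcases x with a | n
    · simp only [alternateWordStep, Sum.elim_inl, freeEval_cons_inl, ih]
    · rw [freeEval_cons_inr, ← ih, ofAdd_natCast_zmod_two]
      cases hn : n.bodd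
      · simp [alternateWordStep, hn]
      · simp only [alternateWordStep, Sum.elim_inr, hn, cond_true, Bool.cond_self]
        rfl

theorem freeEval_alternateWord_eq_iff (ν : α → G) {μ : ℕ → H} {h : H} (hh : h ≠ 1)
    {c₁ c₂ : ℕ} (hc₁ : μ c₁ = h) (hc₂ : μ c₂ = h⁻¹) (w w' : List (α ⊕ ℕ)) :
    freeEval ν μ (alternateWord c₁ c₂ w).1 = freeEval ν μ (alternateWord c₁ c₂ w').1 ↔
      decomposeWord ν w = decomposeWord ν w' := by
  rw [(freeEval_alternateWord ν hc₁ hc₂ w).2, (freeEval_alternateWord ν hc₁ hc₂ w').2,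
    cond_mul_liftConj_inj hh]

theorem freeEval_zmod_two_eq_iff (ν : α → G) (w w' : List (α ⊕ ℕ)) :
    freeEval ν (fun n => Multiplicative.ofAdd (n : ZMod 2)) w =
        freeEval ν (fun n => Multiplicative.ofAdd (n : ZMod 2)) w' ↔
      decomposeWord ν w = decomposeWord ν w' := by
  rw [← freeEval_zmod_two_alternateWord, ← freeEval_zmod_two_alternateWord ν w']
  exact freeEval_alternateWord_eq_iff ν (h := Multiplicative.ofAdd (1 : ZMod 2)) (by decide) rfl
    (by decide) w w'

open Primrec in
theorem primrec_alternateWord [Primcodable α] (c₁ c₂ : ℕ) :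
    Primrec fun w : List (α ⊕ ℕ) => (alternateWord c₁ c₂ w).1 := by
  have hs₁ : Primrec fun q : ((α ⊕ ℕ) × (List (α ⊕ ℕ) × Bool)) × ℕ => q.1.2.1 :=
    fst.comp (snd.comp fst)
  have hs₂ : Primrec fun q : ((α ⊕ ℕ) × (List (α ⊕ ℕ) × Bool)) × ℕ => q.1.2.2 :=
    snd.comp (snd.comp fst)
  have hinl : Primrec₂ fun (q : (α ⊕ ℕ) × (List (α ⊕ ℕ) × Bool)) (a : α) =>
      ((.inl a :: q.2.1, q.2.2) : List (α ⊕ ℕ) × Bool) :=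
    (pair (list_cons.comp (sumInl.comp snd) (fst.comp (snd.comp fst)))
      (snd.comp (snd.comp fst))).to₂
  have hinr : Primrec₂ fun (q : (α ⊕ ℕ) × (List (α ⊕ ℕ) × Bool)) (n : ℕ) =>
      bif n.bodd then ((.inr (cond q.2.2 c₂ c₁) :: q.2.1, !q.2.2) : List (α ⊕ ℕ) × Bool)
        else q.2 :=
    (Primrec.cond (nat_bodd.comp snd)
      (pair (list_cons.comp (sumInr.comp (Primrec.cond hs₂ (const c₂) (const c₁))) hs₁)
        (Primrec.not.comp hs₂))
      (snd.comp fst)).to₂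
  have hstep : Primrec₂ (alternateWordStep (α := α) c₁ c₂) :=
    (sumCasesOn fst hinl hinr).to₂.of_eq fun x _ => by cases x <;> rfl
  exact fst.comp <| (list_foldr Primrec.id (const ([], false))
    (hstep.comp (fst.comp snd) (snd.comp snd)).to₂).of_eq fun _ => rfl

end Words

theorem Universal.of_reduction {β γ : Type} [Primcodable β] [Primcodable γ]
    {R : β → β → Prop} {S : γ → γ → Prop} (hR : Universal R) (hRS : Reduction R S) :
    Universal S := by
  intro E hE
  obtain ⟨f, hf, hEf⟩ := hR E hE
  obtain ⟨g, hg, hRg⟩ := hRS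
  exact ⟨g ∘ f, hg.comp hf, fun a b => (hEf a b).trans (hRg (f a) (f b))⟩

theorem reduction_freeEval_zmod_two {α G H : Type} [Primcodable α] [Group G] [Group H]
    [Nontrivial H] (ν : α → G) {μ : ℕ → H} (hμ : Function.Surjective μ) :
    Reduction (WP (freeEval ν fun n => Multiplicative.ofAdd (n : ZMod 2)))
      (WP (freeEval ν μ)) := by
  obtain ⟨h, hh⟩ := exists_ne (1 : H)
  obtain ⟨c₁, hc₁⟩ := hμ h
  obtain ⟨c₂, hc₂⟩ := hμ h⁻¹
  exact ⟨_, (primrec_alternateWord c₁ c₂).to_comp, fun w w' =>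
    (freeEval_zmod_two_eq_iff ν w w').trans
      (freeEval_alternateWord_eq_iff ν hh hc₁ hc₂ w w').symm⟩

theorem stmt6_general {G : Type} [Group G] (ν : ℕ → G) :
    StarUniversal ν ↔
      ¬ Universal (WP ν) ∧
        Universal (WP (freeEval ν fun n => (Multiplicative.ofAdd (n : ZMod 2)))) := by
  constructor
  · rintro ⟨hν, hfree⟩
    refine ⟨hν, hfree _ inferInstance inferInstance _ fun x => ?_⟩
    exact ⟨(Multiplicative.toAdd x).val, by simp⟩
  · rintro ⟨hν, hU⟩
    exact ⟨hν, fun _ _ _ _ hμ =>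
      Universal.of_reduction hU (reduction_freeEval_zmod_two ν hμ)⟩

/-- `G` is ∗-universal iff the word problem of `G` is not a universal ceer but the word
problem of `G ∗ (ℤ/2ℤ)` is a universal ceer. -/
theorem stmt6 {G : Type} [Group G] (ν : ℕ → G) (hν : Function.Surjective ν)
    (hce : Ceer (WP ν)) :
    StarUniversal ν ↔
      ¬ Universal (WP ν) ∧
        Universal (WP (freeEval ν fun n => (Multiplicative.ofAdd (n : ZMod 2)))) :=
  stmt6_general ν
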